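/- Impossibility of footprint detection (abstract version): there is no prefix-preserving map F : (ℕ → Bool) → (ℕ → Bool) such that for every ρ : ℕ → Bool, the output F ρ is eventually constantly equal to the Boolean value '{t | ρ t = true} is infinite'. -/
import Mathlib

open scoped Classical

noncomputable section
namespace NoDetectorAux

variable (F : (ℕ → Bool) → (ℕ → Bool))
variable (hev : ∀ ρ : ℕ → Bool, ∃ N : ℕ, ∀ t ≥ N,
        F ρ t = (if {t : ℕ | ρ t = true}.Infinite then true else false))

/-- one step of the diagonal construction -/
noncomputable def step (x : ℕ × (ℕ → Bool)) : ℕ × (ℕ → Bool) :=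
  let q : ℕ → Bool := fun m => if m = x.1 then true else x.2 m
  (max (Classical.choose (hev q)) (x.1 + 1) + 1, q)

noncomputable def seq : ℕ → ℕ × (ℕ → Bool)
  | 0 => (0, fun _ => false)
  | k+1 => step F hev (seq k)

noncomputable def n (k : ℕ) : ℕ := (seq F hev k).1
noncomputable def p (k : ℕ) : ℕ → Bool := (seq F hev k).2
noncomputable def q (k : ℕ) : ℕ → Bool := fun m => if m = n F hev k then true else p F hev k m

lemma p_succ (k : ℕ) : p F hev (k+1) = q F hev k := rfl

lemma n_succ (k : ℕ) :
    n F hev (k+1) = max (Classical.choose (hev (q F hev k))) (n F hev k + 1) + 1 := rfl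

lemma n_lt (k : ℕ) : n F hev k < n F hev (k+1) := by
  have := le_max_right (Classical.choose (hev (q F hev k))) (n F hev k + 1)
  rw [n_succ]; omega

lemma n_lt' (k : ℕ) : n F hev k + 1 < n F hev (k+1) := by
  have := le_max_right (Classical.choose (hev (q F hev k))) (n F hev k + 1)
  rw [n_succ]; omega

lemma n_mono : StrictMono (n F hev) := strictMono_nat_of_lt_succ (n_lt F hev)

lemma le_n (k : ℕ) : k ≤ n F hev k := by
  induction k with
  | zero => exact Nat.zero_le _
  | succ k ih => have := n_lt F hev k; omega

lemma false_beyond (k : ℕ) : ∀ m, n F hev k ≤ m → p F hev k m = false := by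
  induction k with
  | zero => intro m _; rfl
  | succ k ih =>
    intro m hm
    have h1 := n_lt' F hev k
    rw [p_succ]
    unfold q
    rw [if_neg (by omega)]
    exact ih m (by omega)

lemma coh : ∀ j k, k ≤ j → ∀ m, m < n F hev k → p F hev j m = p F hev k m := by
  intro j
  induction j with
  | zero => intro k hk m _; interval_cases k; rfl
  | succ j ih =>
    intro k hk m hm
    rcases Nat.eq_or_lt_of_le hk with h | h
    · rw [h]
    · have hkj : k ≤ j := by omega
      have hmj : m < n F hev j := lt_of_lt_of_le hm ((n_mono F hev).le_iff_le.mpr hkj)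
      rw [p_succ]
      unfold q
      rw [if_neg (by omega), ih k hkj m hm]

/-- the diagonal sequence -/
noncomputable def rho : ℕ → Bool := fun m => p F hev (m+1) m

lemma rho_eq (k m : ℕ) (hm : m < n F hev k) : rho F hev m = p F hev k m := by
  unfold rho
  have hmn : m < n F hev (m+1) := lt_of_lt_of_le (by omega) (le_n F hev (m+1))
  rcases le_total k (m+1) with h | h
  · exact coh F hev (m+1) k h m hm
  · exact (coh F hev k (m+1) h m hmn).symm

lemma q_finite (k : ℕ) : ¬ {t : ℕ | q F hev k t = true}.Infinite := by
  intro h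
  have hsub : {t : ℕ | q F hev k t = true} ⊆ Set.Iic (n F hev k) := by
    intro t ht
    by_contra hc
    simp only [Set.mem_Iic, not_le] at hc
    have : q F hev k t = false := by
      unfold q; rw [if_neg (by omega)]
      exact false_beyond F hev k t (by omega)
    simp [Set.mem_setOf_eq, this] at ht
  exact h (Set.Finite.subset (Set.finite_Iic _) hsub)

lemma rho_true (k : ℕ) : rho F hev (n F hev k) = true := by
  rw [rho_eq F hev (k+1) (n F hev k) (n_lt F hev k), p_succ]
  unfold q
  rw [if_pos rfl]

lemma rho_infinite : {t : ℕ | rho F hev t = true}.Infinite := by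
  apply Set.infinite_of_injective_forall_mem (f := n F hev) (n_mono F hev).injective
  intro k
  exact rho_true F hev k

end NoDetectorAux
end

/-- Impossibility of footprint detection: there is no prefix-preserving (causal)
map `F` whose output on every presence function `ρ` is eventually constantly equal
to the Boolean value of "`ρ` is `true` infinitely often". -/
theorem no_causal_infinitely_often_detector :
    ¬ ∃ F : (ℕ → Bool) → (ℕ → Bool),
      (∀ (ρ ρ' : ℕ → Bool) (n : ℕ),
        (∀ m < n, ρ m = ρ' m) → ∀ m < n, F ρ m = F ρ' m) ∧
      (∀ ρ : ℕ → Bool, ∃ N : ℕ, ∀ t ≥ N,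
        F ρ t = (if {t : ℕ | ρ t = true}.Infinite then true else false)) := by
  rintro ⟨F, hpp, hev⟩
  open NoDetectorAux in
  -- F rho is eventually true
  obtain ⟨N, hN⟩ := hev (rho F hev)
  -- pick stage k = N; the witness time
  set k := N with hk
  set t := max (Classical.choose (hev (q F hev k))) (n F hev k + 1) with ht
  have htN : N ≤ t := by
    have h1 := le_n F hev k
    have : k ≤ n F hev k + 1 := by omega
    calc N = k := rfl
      _ ≤ n F hev k + 1 := this
      _ ≤ t := le_max_right _ _
  have htrue : F (rho F hev) t = true := by
    rw [hN t htN, if_pos (rho_infinite F hev)]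
  -- but F rho t = F (q k) t = false
  have hagree : ∀ m < n F hev (k+1), rho F hev m = q F hev k m := by
    intro m hm
    rw [rho_eq F hev (k+1) m hm, p_succ]
  have hlt : t < n F hev (k+1) := by rw [n_succ]; omega
  have heq : F (rho F hev) t = F (q F hev k) t :=
    hpp (rho F hev) (q F hev k) (n F hev (k+1)) hagree t hlt
  have hfalse : F (q F hev k) t = false := by
    have := Classical.choose_spec (hev (q F hev k))
    rw [this t (le_max_left _ _), if_neg (q_finite F hev k)]
  rw [heq, hfalse] at htrue
  exact Bool.false_ne_true htrue
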